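/- Abstract version: let s₁ ≤ s₂ ≤ ... ≤ s_d be real numbers with ∑_{j=1}^d s_j ≤ 0, and set S_k = ∑_{j=1}^k s_j. Then for each k = 1,...,d-1 one has ((k+1)/k)·S_k ≤ S_{k+1} ≤ ((d-k-1)/(d-k))·S_k. -/

import Mathlib

/-! Since `s` is nondecreasing, the first `k` terms are at most `s k` and the last `d - k` are at
least `s k`, so `S_k ≤ k * s k` and `S_k + (d - k) * s k ≤ S_d ≤ 0`. After clearing denominators
these are exactly the two inequalities. -/

open Finset

lemma monotoneOn_Iio_of_le_succ {α : Type*} [Preorder α] {d : ℕ} {s : ℕ → α}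
    (h : ∀ j, j + 1 < d → s j ≤ s (j + 1)) : MonotoneOn s (Set.Iio d) :=
  monotoneOn_of_le_succ Set.ordConnected_Iio fun j _ _ hj ↦ h j hj

section LinearOrderedField

variable {K : Type*} [Field K] [LinearOrder K] [IsStrictOrderedRing K] {s : ℕ → K} {k d : ℕ}

lemma div_mul_sum_range_le_sum_range_succ (hk : 0 < k) (h : ∀ j < k, s j ≤ s k) :
    ((k : K) + 1) / k * ∑ j ∈ range k, s j ≤ ∑ j ∈ range (k + 1), s j := by
  have hS : ∑ j ∈ range k, s j ≤ k * s k := by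
    simpa using sum_le_card_nsmul (range k) s (s k) (by simpa using h)
  rw [sum_range_succ, div_mul_eq_mul_div, div_le_iff₀ (by exact_mod_cast hk)]
  linear_combination hS

lemma sum_range_succ_le_mul_sum_range (hkd : k < d) (h : ∀ j ∈ Ico k d, s k ≤ s j)
    (hsum : ∑ j ∈ range d, s j ≤ 0) :
    ∑ j ∈ range (k + 1), s j ≤ ((d : K) - k - 1) / ((d : K) - k) * ∑ j ∈ range k, s j := by
  have htail : ((d : K) - k) * s k ≤ ∑ j ∈ Ico k d, s j := by
    simpa [Nat.cast_sub hkd.le] using card_nsmul_le_sum (Ico k d) s (s k) h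
  have hsplit := sum_range_add_sum_Ico s hkd.le
  rw [sum_range_succ, div_mul_eq_mul_div, le_div_iff₀ (sub_pos.2 (by exact_mod_cast hkd))]
  linear_combination hsum + htail + hsplit

end LinearOrderedField

/-- Abstract chain inequality: if s₀ ≤ s₁ ≤ … ≤ s_{d-1} with total sum ≤ 0 and
S_k = s₀ + … + s_{k-1}, then ((k+1)/k)·S_k ≤ S_{k+1} ≤ ((d-k-1)/(d-k))·S_k for
1 ≤ k ≤ d-1. -/
theorem abstract_chain_inequality (d : ℕ) (s : ℕ → ℝ)
    (hmono : ∀ j, j + 1 < d → s j ≤ s (j + 1))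
    (hsum : ∑ j ∈ Finset.range d, s j ≤ 0) :
    ∀ k : ℕ, 1 ≤ k → k < d →
      ((k : ℝ) + 1) / k * (∑ j ∈ Finset.range k, s j) ≤
          ∑ j ∈ Finset.range (k + 1), s j ∧
        (∑ j ∈ Finset.range (k + 1), s j) ≤
          ((d : ℝ) - k - 1) / ((d : ℝ) - k) * ∑ j ∈ Finset.range k, s j := by
  intro k hk hkd
  have hs := monotoneOn_Iio_of_le_succ hmono
  exact ⟨div_mul_sum_range_le_sum_range_succ hk fun j hj ↦ hs (hj.trans hkd) hkd hj.le,
    sum_range_succ_le_mul_sum_range hkd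
      (fun j hj ↦ hs hkd (mem_Ico.1 hj).2 (mem_Ico.1 hj).1) hsum⟩
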